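/- Let N ≥ 2, c > 0, b ∈ (0,1), and b₁ = (1−b)/N. Let A be the N×N real matrix whose first column is (b₁, …, b₁, b₁+b)ᵀ, with A_{i,i+1} = 1 for 1 ≤ i ≤ N−1 and all other entries 0. Define x* ∈ ℝ^N by x*_n = (b + (N−n+1)(1−b)/N) · c / (Nb + (N+1)(1−b)/2) for n = 1,…,N. Then A x* = x*, Σₙ x*_n = c, x*_1 ≥ x*_2 ≥ … ≥ x*_N > 0, and x*_N > b x*_1. -/

import Mathlib

/-!
Up to the factor `c / (N b + (N + 1)(1 - b) / 2)`, `x*` is the arithmetic progression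
`w_n = b + (N - n)(1 - b) / N` (`n = 0, …, N - 1`), which starts at `w_0 = 1` and decreases by
`b₁ = (1 - b) / N` at each step, ending at `w_{N-1} = b₁ + b`. Since
`A x = (b₁ x_0 + x_1, …, b₁ x_0 + x_{N-1}, (b₁ + b) x_0)`, this is exactly the fixed-point
equation; the factor makes the sum equal to `c`, and the rest is read off the progression.
-/

open Finset Matrix

namespace AIMD

section FirstColumnShift

variable {R : Type*} [NonAssocSemiring R] {N : ℕ}

def firstColumnShift (a : Fin N → R) : Matrix (Fin N) (Fin N) R :=
  fun i j => if (j : ℕ) = 0 then a i else if (j : ℕ) = (i : ℕ) + 1 then 1 else 0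

theorem firstColumnShift_mulVec_apply (a x : Fin N → R) (i : Fin N) :
    (firstColumnShift a *ᵥ x) i =
      a i * x ⟨0, i.pos⟩ + if h : (i : ℕ) + 1 < N then x ⟨(i : ℕ) + 1, h⟩ else 0 := by
  have hsplit : ∀ j : Fin N, firstColumnShift a i j * x j =
      (if j = ⟨0, i.pos⟩ then a i * x j else 0) +
        if (j : ℕ) = (i : ℕ) + 1 then x j else 0 := by
    intro j
    by_cases hj : (j : ℕ) = 0 <;> simp [firstColumnShift, hj, Fin.ext_iff]
  rw [Matrix.mulVec, dotProduct, Fintype.sum_congr _ _ hsplit, sum_add_distrib, sum_ite_eq' univ]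
  simp only [mem_univ, if_true]
  congr 1
  split_ifs with h
  · rw [Fintype.sum_eq_single ⟨(i : ℕ) + 1, h⟩ (fun j hj => if_neg (by simpa [Fin.ext_iff] using hj))]
    simp
  · exact sum_eq_zero fun j _ => if_neg (by omega)

end FirstColumnShift

theorem sum_range_sub_natCast (x : ℝ) (M : ℕ) :
    ∑ n ∈ range M, (x - n) = M * x - M * (M - 1) / 2 := by
  induction M with
  | zero => simp
  | succ M ih => rw [sum_range_succ, ih]; push_cast; ring

/-- The paper's `x*_{n+1}` up to the factor `c / (N b + (N + 1)(1 - b) / 2)`. -/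
noncomputable def profile (N : ℕ) (b : ℝ) (n : ℕ) : ℝ := b + (N - n) * (1 - b) / N

section Profile

variable {N : ℕ} {b : ℝ}

theorem profile_zero (hN : N ≠ 0) : profile N b 0 = 1 := by
  simp [profile, hN]

theorem profile_eq_add_profile_succ (n : ℕ) :
    profile N b n = (1 - b) / N + profile N b (n + 1) := by
  simp only [profile]; push_cast; ring

theorem profile_sub_one (hN : N ≠ 0) : profile N b (N - 1) = b + (1 - b) / N := by
  simp only [profile, Nat.cast_sub (Nat.one_le_iff_ne_zero.mpr hN)]; push_cast; ring

theorem profile_antitone (hb : b ≤ 1) : Antitone (profile N b) := by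
  intro m n hmn
  have : (m : ℝ) ≤ n := by exact_mod_cast hmn
  unfold profile
  gcongr

theorem profile_pos (hb_pos : 0 < b) (hb_le_one : b ≤ 1) {n : ℕ} (hn : n ≤ N) : 0 < profile N b n := by
  have : (n : ℝ) ≤ N := by exact_mod_cast hn
  have : 0 ≤ (N - n) * (1 - b) / N := by
    apply div_nonneg (mul_nonneg _ _) (Nat.cast_nonneg N) <;> linarith
  unfold profile
  linarith

theorem sum_profile (hN : N ≠ 0) :
    ∑ i : Fin N, profile N b i = N * b + (N + 1) * (1 - b) / 2 := by
  rw [Fin.sum_univ_eq_sum_range (profile N b)]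
  simp only [profile, sum_add_distrib, ← sum_div, ← sum_mul, sum_range_sub_natCast, sum_const,
    card_range, nsmul_eq_mul]
  field_simp
  ring

theorem mul_profile_zero_lt_profile_sub_one (hN : N ≠ 0) (hb : b < 1) :
    b * profile N b 0 < profile N b (N - 1) := by
  rw [profile_zero hN, profile_sub_one hN, mul_one, lt_add_iff_pos_right]
  exact div_pos (by linarith) (by positivity)

theorem firstColumnShift_mulVec_profile (hN : N ≠ 0) :
    firstColumnShift (fun i : Fin N => if (i : ℕ) = N - 1 then (1 - b) / N + b else (1 - b) / N)
      *ᵥ (fun i : Fin N => profile N b i) = fun i : Fin N => profile N b i := by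
  funext i
  rw [firstColumnShift_mulVec_apply]
  simp only [profile_zero hN, mul_one]
  split_ifs with hlast hnext hnext
  · omega
  · rw [hlast, profile_sub_one hN, add_zero, add_comm]
  · rw [← profile_eq_add_profile_succ]
  · omega

end Profile

end AIMD

open AIMD in
/-- Coordinate `i : Fin N` is the paper's coordinate `n = i + 1`. -/
theorem aimd_fixed_point
    (N : ℕ) (hN : 2 ≤ N) (c b : ℝ) (hc : 0 < c) (hb : b ∈ Set.Ioo (0 : ℝ) 1)
    (b₁ : ℝ) (hb₁ : b₁ = (1 - b) / N)
    (A : Matrix (Fin N) (Fin N) ℝ)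
    (hA : ∀ i j : Fin N, A i j =
      if (j : ℕ) = 0 then (if (i : ℕ) = N - 1 then b₁ + b else b₁)
      else if (j : ℕ) = (i : ℕ) + 1 then 1 else 0)
    (xstar : Fin N → ℝ)
    (hxstar : ∀ i : Fin N, xstar i =
      (b + ((N : ℝ) - (i : ℕ)) * (1 - b) / N) * c
        / ((N : ℝ) * b + ((N : ℝ) + 1) * (1 - b) / 2)) :
    A.mulVec xstar = xstar
    ∧ ∑ i, xstar i = c
    ∧ (∀ i j : Fin N, i ≤ j → xstar j ≤ xstar i)
    ∧ (∀ i, 0 < xstar i)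
    ∧ b * xstar ⟨0, by omega⟩ < xstar ⟨N - 1, by omega⟩ := by
  obtain ⟨hb_pos, hb_lt_one⟩ := hb
  have hN₀ : N ≠ 0 := by omega
  set D := (N : ℝ) * b + ((N : ℝ) + 1) * (1 - b) / 2
  have hw_pos (i : Fin N) : 0 < profile N b i := profile_pos hb_pos hb_lt_one.le i.isLt.le
  have hD : 0 < D :=
    (sum_pos (fun i _ => hw_pos i) ⟨⟨0, by omega⟩, mem_univ _⟩).trans_eq (sum_profile hN₀)
  have hcD : 0 < c / D := div_pos hc hD
  have hx : xstar = (c / D) • fun i : Fin N => profile N b i := by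
    funext i; rw [hxstar]; simp only [Pi.smul_apply, smul_eq_mul, profile]; ring
  have hA' : A = firstColumnShift
      (fun i : Fin N => if (i : ℕ) = N - 1 then (1 - b) / N + b else (1 - b) / N) := by
    ext i j; rw [hA, hb₁]; rfl
  subst hx hA'
  refine ⟨?_, ?_, ?_, ?_, ?_⟩
  · rw [mulVec_smul, firstColumnShift_mulVec_profile hN₀]
  · simp only [Pi.smul_apply, smul_eq_mul, ← mul_sum, sum_profile hN₀]
    exact div_mul_cancel₀ c hD.ne'
  · exact fun i j hij => mul_le_mul_of_nonneg_left (profile_antitone hb_lt_one.le hij) hcD.le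
  · exact fun i => mul_pos hcD (hw_pos i)
  · simp only [Pi.smul_apply, smul_eq_mul, mul_left_comm b]
    exact mul_lt_mul_of_pos_left (mul_profile_zero_lt_profile_sub_one hN₀ hb_lt_one) hcD
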